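/- A quaternate Dyck crossword picture is neutralizable if and only if its precedence relation between rectangles is acyclic (equivalently, irreflexive). -/

import Mathlib

/-- The alphabet Δ₁ = {a, b, c, d}. -/
inductive Del : Type
  | a | b | c | d
deriving DecidableEq

/-- Row cancellation: pairs [a,b] and [c,d]. -/
def rowStep (w w' : List Del) : Prop :=
  ∃ (u v : List Del),
    (w = u ++ [Del.a, Del.b] ++ v ∨ w = u ++ [Del.c, Del.d] ++ v) ∧ w' = u ++ v

/-- The row Dyck language D^Row. -/
def DRow (w : List Del) : Prop := Relation.ReflTransGen rowStep w []

/-- Column cancellation: pairs [a,c] and [b,d]. -/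
def colStep (w w' : List Del) : Prop :=
  ∃ (u v : List Del),
    (w = u ++ [Del.a, Del.c] ++ v ∨ w = u ++ [Del.b, Del.d] ++ v) ∧ w' = u ++ v

/-- The column Dyck language D^Col. -/
def DCol (w : List Del) : Prop := Relation.ReflTransGen colStep w []

/-- Row i (of length n) of a picture. -/
def row (p : ℕ → ℕ → Del) (n i : ℕ) : List Del := (List.range n).map (p i)

/-- Column j (of length m) of a picture. -/
def col (p : ℕ → ℕ → Del) (m j : ℕ) : List Del :=
  (List.range m).map (fun i => p i j)

/-- The Dyck crossword language DC₁: nonempty pictures all of whose rows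
are in D^Row and all of whose columns are in D^Col. -/
def DC (m n : ℕ) (p : ℕ → ℕ → Del) : Prop :=
  1 ≤ m ∧ 1 ≤ n ∧ (∀ i < m, DRow (row p n i)) ∧ (∀ j < n, DCol (col p m j))

/-- Positions `j < j'` match in a row word: the letters form a row matching
pair ([a,b] or [c,d]) and the factor strictly between them is in D^Row. -/
def rowMatchW (w : List Del) (j j' : ℕ) : Prop :=
  j < j' ∧ j' < w.length ∧
    ((w[j]? = some Del.a ∧ w[j']? = some Del.b) ∨
      (w[j]? = some Del.c ∧ w[j']? = some Del.d)) ∧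
    DRow ((w.drop (j + 1)).take (j' - (j + 1)))

/-- Positions `i < i'` match in a column word: the letters form a column
matching pair ([a,c] or [b,d]) and the factor strictly between them is in
D^Col. -/
def colMatchW (w : List Del) (i i' : ℕ) : Prop :=
  i < i' ∧ i' < w.length ∧
    ((w[i]? = some Del.a ∧ w[i']? = some Del.c) ∨
      (w[i]? = some Del.b ∧ w[i']? = some Del.d)) ∧
    DCol ((w.drop (i + 1)).take (i' - (i + 1)))

/-- Row edge of the matching graph of picture `p` (of size m×n) between cells
`u` and `v`: same row, matched positions (in either order). -/
def rowEdge (p : ℕ → ℕ → Del) (n : ℕ) (u v : ℕ × ℕ) : Prop :=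
  u.1 = v.1 ∧ (rowMatchW (row p n u.1) u.2 v.2 ∨ rowMatchW (row p n u.1) v.2 u.2)

/-- Column edge of the matching graph between cells `u` and `v`. -/
def colEdge (p : ℕ → ℕ → Del) (m : ℕ) (u v : ℕ × ℕ) : Prop :=
  u.2 = v.2 ∧ (colMatchW (col p m u.2) u.1 v.1 ∨ colMatchW (col p m u.2) v.1 u.1)

/-- Adjacency in the matching graph. -/
def adj (p : ℕ → ℕ → Del) (m n : ℕ) (u v : ℕ × ℕ) : Prop :=
  rowEdge p n u v ∨ colEdge p m u v

/-- The alphabet Δ₁ ∪ {N}. -/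
inductive DelN : Type
  | a | b | c | d | N
deriving DecidableEq

def embed : Del → DelN
  | Del.a => DelN.a
  | Del.b => DelN.b
  | Del.c => DelN.c
  | Del.d => DelN.d

/-- One neutralization step inside an m×n picture: a subpicture of size at
least 2×2 whose four corners are a, b, c, d and whose remaining cells are
all N is replaced by an all-N subpicture. -/
def nstep (m n : ℕ) (q q' : ℕ → ℕ → DelN) : Prop :=
  ∃ (i j i' j' : ℕ), i < i' ∧ j < j' ∧ i' < m ∧ j' < n ∧
    q i j = DelN.a ∧ q i j' = DelN.b ∧ q i' j = DelN.c ∧ q i' j' = DelN.d ∧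
    (∀ r s, i ≤ r → r ≤ i' → j ≤ s → s ≤ j' →
      ¬((r = i ∨ r = i') ∧ (s = j ∨ s = j')) → q r s = DelN.N) ∧
    (∀ r s, (i ≤ r ∧ r ≤ i' ∧ j ≤ s ∧ s ≤ j') → q' r s = DelN.N) ∧
    (∀ r s, ¬(i ≤ r ∧ r ≤ i' ∧ j ≤ s ∧ s ≤ j') → q' r s = q r s)

/-- The neutralizable Dyck language DN₁: nonempty pictures over Δ₁ that can
be transformed into the all-N picture by neutralization steps. -/
def DN (m n : ℕ) (p : ℕ → ℕ → Del) : Prop :=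
  1 ≤ m ∧ 1 ≤ n ∧
    ∃ q : ℕ → ℕ → DelN,
      Relation.ReflTransGen (nstep m n) (fun r s => embed (p r s)) q ∧
      ∀ r < m, ∀ s < n, q r s = DelN.N

/-- `(r, s)` is a corner of the rectangle `R = (i, j, i', j')`. -/
def cornerOf (R : ℕ × ℕ × ℕ × ℕ) (r s : ℕ) : Prop :=
  (r = R.1 ∨ r = R.2.2.1) ∧ (s = R.2.1 ∨ s = R.2.2.2)

/-- `(r, s)` lies inside the bounding box of rectangle `R` or on its sides. -/
def inBox (R : ℕ × ℕ × ℕ × ℕ) (r s : ℕ) : Prop :=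
  R.1 ≤ r ∧ r ≤ R.2.2.1 ∧ R.2.1 ≤ s ∧ s ≤ R.2.2.2

/-- `R = (i, j, i', j')` is a rectangle (length-4 circuit) of the matching
graph of picture `p`: its four sides are row and column matching edges. -/
def IsRect (m n : ℕ) (p : ℕ → ℕ → Del) (R : ℕ × ℕ × ℕ × ℕ) : Prop :=
  R.1 < R.2.2.1 ∧ R.2.1 < R.2.2.2 ∧ R.2.2.1 < m ∧ R.2.2.2 < n ∧
  rowMatchW (row p n R.1) R.2.1 R.2.2.2 ∧
  rowMatchW (row p n R.2.2.1) R.2.1 R.2.2.2 ∧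
  colMatchW (col p m R.2.1) R.1 R.2.2.1 ∧
  colMatchW (col p m R.2.2.2) R.1 R.2.2.1

/-- The quaternate Dyck language DQ₁: DC₁ pictures all of whose matching
circuits have length 4, i.e. each cell is a corner of a rectangle. -/
def DQ (m n : ℕ) (p : ℕ → ℕ → Del) : Prop :=
  DC m n p ∧
    ∀ r < m, ∀ s < n, ∃ R, IsRect m n p R ∧ cornerOf R r s

/-- Rectangle `α` has priority over rectangle `β` (α must be neutralized
before β): some corner of `α` falls inside `β`'s bounding box or on its
sides. -/
def prio (m n : ℕ) (p : ℕ → ℕ → Del) (α β : ℕ × ℕ × ℕ × ℕ) : Prop :=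
  IsRect m n p α ∧ IsRect m n p β ∧ α ≠ β ∧
    ∃ r s, cornerOf α r s ∧ inBox β r s

/-- The precedence relation ≺: transitive closure of priority. -/
def prec (m n : ℕ) (p : ℕ → ℕ → Del) : (ℕ × ℕ × ℕ × ℕ) → (ℕ × ℕ × ℕ × ℕ) → Prop :=
  Relation.TransGen (prio m n p)

/-!
Every picture reachable from `p` by neutralization steps is `p` with the boxes of a set `S` of
rectangles replaced by `N`, where `S` is closed under priority: a rectangle with a corner in a
neutralized box has been neutralized itself. The box cleared by a step is always a rectangle of
`p`, since row and column matchings are unique and non-crossing (a height-function argument on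
Dyck words). So rectangles are neutralized in an order extending priority, and a rectangle on a
cycle never is. Conversely, when precedence is acyclic, neutralizing the rectangles in such an
order clears the whole picture, because every cell is a corner of some rectangle.
-/

open Relation

theorem Finset.exists_forall_not_rel_of_acyclic {β : Type*} {r : β → β → Prop}
    (hr : ∀ a, ¬ TransGen r a a) {s : Finset β} (hs : s.Nonempty) :
    ∃ a ∈ s, ∀ b ∈ s, ¬ r a b := by
  have : IsStrictOrder β (flip (TransGen r)) :=
    { irrefl := hr, trans := fun _ _ _ h₁ h₂ => h₂.trans h₁ }
  obtain ⟨⟨a, ha⟩, -, hmin⟩ := (s.wellFoundedOn (r := flip (TransGen r))).has_min Set.univ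
    ⟨⟨_, hs.choose_spec⟩, trivial⟩
  exact ⟨a, ha, fun b hb hab => hmin ⟨b, hb⟩ trivial (TransGen.single hab)⟩

section Balance

variable {α : Type*} (f : α → ℤ)

def IsBalanced (w : List α) : Prop :=
  (w.map f).sum = 0 ∧ ∀ u v, w = u ++ v → 0 ≤ (u.map f).sum

variable {f}

theorem IsBalanced.prefix_nonneg {u v : List α} (h : IsBalanced f (u ++ v)) :
    0 ≤ (u.map f).sum :=
  h.2 u v rfl

theorem IsBalanced.suffix_nonpos {u v : List α} (h : IsBalanced f (u ++ v)) :
    (v.map f).sum ≤ 0 := by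
  have := h.1
  simp only [List.map_append, List.sum_append] at this
  linarith [h.prefix_nonneg]

theorem IsBalanced.insert_pair {u v : List α} {x y : α} (h : IsBalanced f (u ++ v))
    (hx : f x = 1) (hy : f y = -1) : IsBalanced f (u ++ [x, y] ++ v) := by
  refine ⟨by simpa [hx, hy] using h.1, fun u' v' huv => ?_⟩
  rw [List.append_assoc, eq_comm, List.append_eq_append_iff] at huv
  rcases huv with ⟨t, rfl, -⟩ | ⟨t, rfl, ht⟩
  · exact h.2 u' (t ++ v) (List.append_assoc _ _ _)
  · rcases t with _ | ⟨z, _ | ⟨z', t⟩⟩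
    · simpa using h.prefix_nonneg
    · obtain ⟨rfl, -⟩ : x = z ∧ _ := by simpa using ht
      simpa [hx] using h.prefix_nonneg.trans (le_add_of_nonneg_right zero_le_one)
    · simp only [List.cons_append, List.nil_append, List.cons.injEq] at ht
      obtain ⟨rfl, rfl, rfl⟩ := ht
      simpa [hx, hy] using h.2 (u ++ t) v' (List.append_assoc _ _ _).symm

theorem isBalanced_of_reflTransGen {stp : List α → List α → Prop}
    (hstp : ∀ w w', stp w w' →
      ∃ u v x y, f x = 1 ∧ f y = -1 ∧ w = u ++ [x, y] ++ v ∧ w' = u ++ v)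
    {w : List α} (h : ReflTransGen stp w []) : IsBalanced f w := by
  induction h using ReflTransGen.head_induction_on with
  | refl => exact ⟨rfl, fun u v huv => by simp [(List.append_eq_nil_iff.mp huv.symm).1]⟩
  | head hs _ ih =>
    obtain ⟨u, v, x, y, hx, hy, rfl, rfl⟩ := hstp _ _ hs
    exact ih.insert_pair hx hy

end Balance

theorem List.extract_eq_extract_append_cons {α : Type*} (w : List α) {a k b : ℕ}
    (hak : a ≤ k) (hkb : k < b) (hb : b ≤ w.length) :
    w.extract a b = w.extract a k ++ w[k] :: w.extract (k + 1) b := by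
  simp only [List.extract_eq_take_drop]
  rw [show b - a = (k - a) + (b - k) by omega, List.take_add, List.drop_drop,
    show a + (k - a) = k by omega, List.drop_eq_getElem_cons (i := k) (by omega),
    show b - k = (b - (k + 1)) + 1 by omega, List.take_succ_cons]

section Match

variable {α : Type*} {f : α → ℤ}

variable (f) in
def IsMatch (w : List α) (j j' : ℕ) : Prop :=
  j < j' ∧ j' < w.length ∧ w[j]?.map f = some 1 ∧ w[j']?.map f = some (-1) ∧
    IsBalanced f (w.extract (j + 1) j')

theorem IsMatch.exists_extract_eq {w : List α} {j j' k : ℕ} (h : IsMatch f w j j') (hjk : j < k)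
    (hkj' : k < j') : ∃ x, w[k]? = some x ∧
      w.extract (j + 1) j' = w.extract (j + 1) k ++ [x] ++ w.extract (k + 1) j' := by
  have hk : k < w.length := hkj'.trans h.2.1
  refine ⟨w[k], List.getElem?_eq_getElem hk, ?_⟩
  rw [List.append_assoc, List.singleton_append]
  exact w.extract_eq_extract_append_cons (by omega) hkj' h.2.1.le

theorem IsMatch.weight_left {w : List α} {j j' : ℕ} {x : α} (h : IsMatch f w j j')
    (hx : w[j]? = some x) : f x = 1 := by
  simpa [hx] using h.2.2.1

theorem IsMatch.weight_right {w : List α} {j j' : ℕ} {y : α} (h : IsMatch f w j j')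
    (hy : w[j']? = some y) : f y = -1 := by
  simpa [hy] using h.2.2.2.1

theorem IsMatch.weight_interior {w : List α} {j j' : ℕ} (h : IsMatch f w j j') :
    ((w.extract (j + 1) j').map f).sum = 0 :=
  h.2.2.2.2.1

theorem IsMatch.not_lt_of_same_left {w : List α} {j j₁ j₂ : ℕ} (h₁ : IsMatch f w j j₁)
    (h₂ : IsMatch f w j j₂) : ¬ j₁ < j₂ := fun hlt => by
  obtain ⟨y, hy, hsplit⟩ := h₂.exists_extract_eq h₁.1 hlt
  have hpre := (hsplit ▸ h₂.2.2.2.2).prefix_nonneg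
  simp only [List.map_append, List.sum_append, List.map_singleton, List.sum_singleton,
    h₁.weight_right hy, h₁.weight_interior] at hpre
  omega

theorem IsMatch.not_lt_of_same_right {w : List α} {j₁ j₂ j' : ℕ} (h₁ : IsMatch f w j₁ j')
    (h₂ : IsMatch f w j₂ j') : ¬ j₁ < j₂ := fun hlt => by
  obtain ⟨x, hx, hsplit⟩ := h₁.exists_extract_eq hlt h₂.1
  have hsuf := (List.append_assoc _ _ _ ▸ hsplit ▸ h₁.2.2.2.2).suffix_nonpos
  simp only [List.map_append, List.sum_append, List.map_singleton, List.sum_singleton,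
    h₂.weight_left hx, h₂.weight_interior] at hsuf
  omega

theorem IsMatch.right_unique {w : List α} {j j₁ j₂ : ℕ} (h₁ : IsMatch f w j j₁)
    (h₂ : IsMatch f w j j₂) : j₁ = j₂ :=
  le_antisymm (not_lt.1 (h₂.not_lt_of_same_left h₁)) (not_lt.1 (h₁.not_lt_of_same_left h₂))

theorem IsMatch.left_unique {w : List α} {j₁ j₂ j' : ℕ} (h₁ : IsMatch f w j₁ j')
    (h₂ : IsMatch f w j₂ j') : j₁ = j₂ :=
  le_antisymm (not_lt.1 (h₂.not_lt_of_same_right h₁)) (not_lt.1 (h₁.not_lt_of_same_right h₂))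

/-- Seen from `(c, d)` the factor strictly between `c` and `b` has height at least `1`, seen from
`(a, b)` at most `-1`. -/
theorem IsMatch.not_cross {w : List α} {a b c d : ℕ} (h₁ : IsMatch f w a b)
    (h₂ : IsMatch f w c d) (hac : a < c) (hcb : c < b) (hbd : b < d) : False := by
  obtain ⟨x, hx, hsplit₁⟩ := h₁.exists_extract_eq hac hcb
  obtain ⟨y, hy, hsplit₂⟩ := h₂.exists_extract_eq hcb hbd
  have hsuf := (List.append_assoc _ _ _ ▸ hsplit₁ ▸ h₁.2.2.2.2).suffix_nonpos
  have hpre := (hsplit₂ ▸ h₂.2.2.2.2).prefix_nonneg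
  simp only [List.map_append, List.sum_append, List.map_singleton, List.sum_singleton,
    h₂.weight_left hx, h₁.weight_right hy] at hsuf hpre
  omega

theorem IsMatch.right_eq_of_le {w : List α} {j j₁ c j' : ℕ} (h₁ : IsMatch f w j j₁)
    (h₂ : IsMatch f w c j') (hjj' : j < j') (hj₁ : j' ≤ j₁) (hc : c ≤ j) : j₁ = j' := by
  rcases hc.lt_or_eq with hc | rfl
  · rcases hj₁.lt_or_eq with hj₁ | hj₁
    · exact (h₂.not_cross h₁ hc hjj' hj₁).elim
    · exact hj₁.symm
  · exact h₁.right_unique h₂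

end Match

def rowWeight : Del → ℤ
  | .a => 1 | .b => -1 | .c => 1 | .d => -1

def colWeight : Del → ℤ
  | .a => 1 | .b => 1 | .c => -1 | .d => -1

theorem DRow.isBalanced {w : List Del} (h : DRow w) : IsBalanced rowWeight w :=
  isBalanced_of_reflTransGen (fun _ _ ⟨u, v, hw, hw'⟩ => hw.elim
    (fun hw => ⟨u, v, .a, .b, rfl, rfl, hw, hw'⟩)
    (fun hw => ⟨u, v, .c, .d, rfl, rfl, hw, hw'⟩)) h

theorem DCol.isBalanced {w : List Del} (h : DCol w) : IsBalanced colWeight w :=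
  isBalanced_of_reflTransGen (fun _ _ ⟨u, v, hw, hw'⟩ => hw.elim
    (fun hw => ⟨u, v, .a, .c, rfl, rfl, hw, hw'⟩)
    (fun hw => ⟨u, v, .b, .d, rfl, rfl, hw, hw'⟩)) h

theorem rowMatchW.isMatch {w : List Del} {j j' : ℕ} (h : rowMatchW w j j') :
    IsMatch rowWeight w j j' := by
  obtain ⟨hjj', hj', hxy, hD⟩ := h
  refine ⟨hjj', hj', ?_, ?_, hD.isBalanced⟩ <;>
    rcases hxy with ⟨hx, hy⟩ | ⟨hx, hy⟩ <;> simp [hx, hy, rowWeight]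

theorem colMatchW.isMatch {w : List Del} {i i' : ℕ} (h : colMatchW w i i') :
    IsMatch colWeight w i i' := by
  obtain ⟨hii', hi', hxy, hD⟩ := h
  refine ⟨hii', hi', ?_, ?_, hD.isBalanced⟩ <;>
    rcases hxy with ⟨hx, hy⟩ | ⟨hx, hy⟩ <;> simp [hx, hy, colWeight]

section Rectangles

variable {m n : ℕ} {p : ℕ → ℕ → Del}

theorem row_getElem? {i j : ℕ} (hj : j < n) : (row p n i)[j]? = some (p i j) := by
  simp [row, hj]

theorem col_getElem? {i j : ℕ} (hi : i < m) : (col p m j)[i]? = some (p i j) := by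
  simp [col, hi]

theorem IsRect.letters {i j i' j' : ℕ} (hR : IsRect m n p (i, j, i', j')) :
    p i j = .a ∧ p i j' = .b ∧ p i' j = .c ∧ p i' j' = .d := by
  obtain ⟨hii', hjj', hi', hj', ⟨-, -, ht, -⟩, ⟨-, -, hb, -⟩, ⟨-, -, hl, -⟩, ⟨-, -, hr, -⟩⟩ := hR
  rw [row_getElem? (hjj'.trans hj'), row_getElem? hj'] at ht hb
  rw [col_getElem? (hii'.trans hi'), col_getElem? hi'] at hl hr
  -- the top left letter opens both a row pair and a column pair, so it is `a`
  rcases ht with ⟨h₁, h₂⟩ | ⟨h₁, h₂⟩ <;> rcases hb with ⟨h₃, h₄⟩ | ⟨h₃, h₄⟩ <;>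
    rcases hl with ⟨h₅, h₆⟩ | ⟨h₅, h₆⟩ <;> rcases hr with ⟨h₇, h₈⟩ | ⟨h₇, h₈⟩ <;> simp_all

theorem IsRect.inBox_of_cornerOf {R : ℕ × ℕ × ℕ × ℕ} (hR : IsRect m n p R) {r s : ℕ}
    (hc : cornerOf R r s) : inBox R r s := by
  obtain ⟨hii', hjj', -⟩ := hR
  obtain ⟨rfl | rfl, rfl | rfl⟩ := hc <;> exact ⟨by omega, by omega, by omega, by omega⟩

def rectCorner (R : ℕ × ℕ × ℕ × ℕ) : Del → ℕ × ℕ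
  | .a => (R.1, R.2.1)
  | .b => (R.1, R.2.2.2)
  | .c => (R.2.2.1, R.2.1)
  | .d => (R.2.2.1, R.2.2.2)

theorem IsRect.eq_rectCorner {R : ℕ × ℕ × ℕ × ℕ} (hR : IsRect m n p R) {r s : ℕ}
    (hc : cornerOf R r s) : (r, s) = rectCorner R (p r s) := by
  obtain ⟨i, j, i', j'⟩ := R
  obtain ⟨ha, hb, hc', hd⟩ := hR.letters
  obtain ⟨rfl | rfl, rfl | rfl⟩ := hc <;> simp [rectCorner, ha, hb, hc', hd]

theorem IsRect.eq_of_cornerOf {R₁ R₂ : ℕ × ℕ × ℕ × ℕ} (h₁ : IsRect m n p R₁)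
    (h₂ : IsRect m n p R₂) {r s : ℕ} (hc₁ : cornerOf R₁ r s) (hc₂ : cornerOf R₂ r s) :
    R₁ = R₂ := by
  have e₁ := h₁.eq_rectCorner hc₁
  have e₂ := h₂.eq_rectCorner hc₂
  generalize p r s = x at e₁ e₂
  obtain ⟨i₁, j₁, i₁', j₁'⟩ := R₁
  obtain ⟨i₂, j₂, i₂', j₂'⟩ := R₂
  obtain ⟨-, -, -, -, t₁, b₁, l₁, r₁⟩ := h₁
  obtain ⟨-, -, -, -, t₂, b₂, l₂, r₂⟩ := h₂
  -- the shared letter puts the shared cell at the same corner of both, so the two sides through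
  -- it are matches with a common end
  cases x <;> simp only [rectCorner, Prod.mk.injEq] at e₁ e₂ <;>
    obtain ⟨rfl, rfl⟩ := e₁ <;> obtain ⟨rfl, rfl⟩ := e₂ <;>
    simp only [Prod.mk.injEq, true_and, and_true]
  · exact ⟨l₁.isMatch.right_unique l₂.isMatch, t₁.isMatch.right_unique t₂.isMatch⟩
  · exact ⟨t₁.isMatch.left_unique t₂.isMatch, r₁.isMatch.right_unique r₂.isMatch⟩
  · exact ⟨l₁.isMatch.left_unique l₂.isMatch, b₁.isMatch.right_unique b₂.isMatch⟩
  · exact ⟨r₁.isMatch.left_unique r₂.isMatch, b₁.isMatch.left_unique b₂.isMatch⟩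

end Rectangles

section Neutralization

variable {m n : ℕ} {p : ℕ → ℕ → Del} {S : Finset (ℕ × ℕ × ℕ × ℕ)} {α : ℕ × ℕ × ℕ × ℕ}

def Covered (S : Finset (ℕ × ℕ × ℕ × ℕ)) (r s : ℕ) : Prop :=
  ∃ γ ∈ S, inBox γ r s

open Classical in
noncomputable def neutralize (p : ℕ → ℕ → Del) (S : Finset (ℕ × ℕ × ℕ × ℕ)) (r s : ℕ) :
    DelN :=
  if Covered S r s then .N else embed (p r s)

theorem embed_ne_N (x : Del) : embed x ≠ .N := by
  cases x <;> decide

theorem embed_injective : Function.Injective embed := by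
  intro x y h
  cases x <;> cases y <;> first | rfl | cases h

theorem neutralize_eq_N_iff {r s : ℕ} : neutralize p S r s = .N ↔ Covered S r s := by
  unfold neutralize
  split_ifs with h <;> simp [h, embed_ne_N]

theorem neutralize_eq_embed_iff {r s : ℕ} {x : Del} :
    neutralize p S r s = embed x ↔ ¬ Covered S r s ∧ p r s = x := by
  unfold neutralize
  split_ifs with h
  · simp [h, (embed_ne_N x).symm]
  · simp [h, embed_injective.eq_iff]

theorem neutralize_empty : neutralize p ∅ = fun r s => embed (p r s) := by
  funext r s
  simp [neutralize, Covered]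

theorem covered_insert_iff {r s : ℕ} :
    Covered (insert α S) r s ↔ inBox α r s ∨ Covered S r s := by
  simp [Covered]

theorem neutralize_insert_of_inBox {r s : ℕ} (h : inBox α r s) :
    neutralize p (insert α S) r s = .N :=
  neutralize_eq_N_iff.2 (covered_insert_iff.2 (.inl h))

theorem neutralize_insert_of_not_inBox {r s : ℕ} (h : ¬ inBox α r s) :
    neutralize p (insert α S) r s = neutralize p S r s := by
  classical
  unfold neutralize
  exact if_congr (by rw [covered_insert_iff, or_iff_right h]) rfl rfl

def IsReady (S : Finset (ℕ × ℕ × ℕ × ℕ)) (α : ℕ × ℕ × ℕ × ℕ) : Prop :=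
  (∀ r s, cornerOf α r s → ¬ Covered S r s) ∧
    ∀ r s, inBox α r s → ¬ cornerOf α r s → Covered S r s

theorem nstep_neutralize_insert (hα : IsRect m n p α) (hready : IsReady S α) :
    nstep m n (neutralize p S) (neutralize p (insert α S)) := by
  obtain ⟨i, j, i', j'⟩ := α
  obtain ⟨ha, hb, hc, hd⟩ := hα.letters
  obtain ⟨hii', hjj', hi', hj', -⟩ := hα
  have corner {r s : ℕ} {x : Del} (hrs : cornerOf (i, j, i', j') r s) (hx : p r s = x) :
      neutralize p S r s = embed x :=
    neutralize_eq_embed_iff.2 ⟨hready.1 r s hrs, hx⟩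
  exact ⟨i, j, i', j', hii', hjj', hi', hj', corner ⟨.inl rfl, .inl rfl⟩ ha,
    corner ⟨.inl rfl, .inr rfl⟩ hb, corner ⟨.inr rfl, .inl rfl⟩ hc,
    corner ⟨.inr rfl, .inr rfl⟩ hd,
    fun r s h₁ h₂ h₃ h₄ hnc => neutralize_eq_N_iff.2 (hready.2 r s ⟨h₁, h₂, h₃, h₄⟩ hnc),
    fun _ _ hrs => neutralize_insert_of_inBox (α := (i, j, i', j')) hrs,
    fun _ _ hrs => neutralize_insert_of_not_inBox (α := (i, j, i', j')) hrs⟩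

theorem exists_isReady_of_nstep {q : ℕ → ℕ → DelN} (h : nstep m n (neutralize p S) q) :
    ∃ i j i' j', i < i' ∧ j < j' ∧ i' < m ∧ j' < n ∧
      p i j = .a ∧ p i j' = .b ∧ p i' j = .c ∧ p i' j' = .d ∧
      IsReady S (i, j, i', j') ∧ q = neutralize p (insert (i, j, i', j') S) := by
  obtain ⟨i, j, i', j', hii', hjj', hi', hj', qa, qb, qc, qd, hN, hin, hout⟩ := h
  obtain ⟨ua, ha⟩ := (neutralize_eq_embed_iff (x := .a)).1 qa
  obtain ⟨ub, hb⟩ := (neutralize_eq_embed_iff (x := .b)).1 qb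
  obtain ⟨uc, hc⟩ := (neutralize_eq_embed_iff (x := .c)).1 qc
  obtain ⟨ud, hd⟩ := (neutralize_eq_embed_iff (x := .d)).1 qd
  refine ⟨i, j, i', j', hii', hjj', hi', hj', ha, hb, hc, hd, ⟨?_, ?_⟩, ?_⟩
  · rintro r s ⟨rfl | rfl, rfl | rfl⟩ <;> assumption
  · exact fun r s hrs hnc => neutralize_eq_N_iff.1 (hN r s hrs.1 hrs.2.1 hrs.2.2.1 hrs.2.2.2 hnc)
  · funext r s
    by_cases hrs : inBox (i, j, i', j') r s
    · rw [hin r s hrs, neutralize_insert_of_inBox hrs]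
    · rw [hout r s hrs, neutralize_insert_of_not_inBox hrs]

end Neutralization

section PrioClosed

variable {m n : ℕ} {p : ℕ → ℕ → Del} {S : Finset (ℕ × ℕ × ℕ × ℕ)} {α : ℕ × ℕ × ℕ × ℕ}

def IsRectCovered (m n : ℕ) (p : ℕ → ℕ → Del) : Prop :=
  ∀ r < m, ∀ s < n, ∃ R, IsRect m n p R ∧ cornerOf R r s

def IsPrioClosed (m n : ℕ) (p : ℕ → ℕ → Del) (S : Finset (ℕ × ℕ × ℕ × ℕ)) : Prop :=
  (∀ γ ∈ S, IsRect m n p γ) ∧ ∀ β γ, prio m n p β γ → γ ∈ S → β ∈ S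

theorem IsPrioClosed.mem_of_covered (hS : IsPrioClosed m n p S) {γ : ℕ × ℕ × ℕ × ℕ}
    (hγ : IsRect m n p γ) {r s : ℕ} (hc : cornerOf γ r s) (hcov : Covered S r s) : γ ∈ S := by
  obtain ⟨δ, hδ, hbox⟩ := hcov
  by_cases hγδ : γ = δ
  · exact hγδ ▸ hδ
  · exact hS.2 γ δ ⟨hγ, hS.1 δ hδ, hγδ, r, s, hc, hbox⟩ hδ

theorem IsPrioClosed.covered_of_covered (hS : IsPrioClosed m n p S) {γ : ℕ × ℕ × ℕ × ℕ}
    (hγ : IsRect m n p γ) {r s r' s' : ℕ} (hc : cornerOf γ r s) (hcov : Covered S r s)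
    (hc' : cornerOf γ r' s') : Covered S r' s' :=
  ⟨γ, hS.mem_of_covered hγ hc hcov, hγ.inBox_of_cornerOf hc'⟩

/-- The rectangle with `a`-corner `(i, j)` ends where the box does: otherwise one of its corners,
or one of the rectangle with `b`-corner `(i, j')` or `c`-corner `(i', j)`, lies strictly inside a
side of the box, so is covered, and by closure so is a corner of the box. -/
theorem IsPrioClosed.isRect_of_isReady (hS : IsPrioClosed m n p S)
    (hcov : IsRectCovered m n p) {i j i' j' : ℕ} (hii' : i < i') (hjj' : j < j') (hi' : i' < m)
    (hj' : j' < n) (ha : p i j = .a) (hb : p i j' = .b) (hc : p i' j = .c)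
    (hready : IsReady S (i, j, i', j')) : IsRect m n p (i, j, i', j') := by
  have side {γ : ℕ × ℕ × ℕ × ℕ} (hγ : IsRect m n p γ) {r s r' s' : ℕ} (hrs : cornerOf γ r s)
      (hbox : inBox (i, j, i', j') r s) (hnc : ¬ cornerOf (i, j, i', j') r s)
      (hrs' : cornerOf γ r' s') (hc' : cornerOf (i, j, i', j') r' s') : False :=
    hready.1 r' s' hc' (hS.covered_of_covered hγ hrs (hready.2 r s hbox hnc) hrs')
  obtain ⟨⟨i₀, j₀, i₁, j₁⟩, hα, hαc⟩ := hcov i (hii'.trans hi') j (hjj'.trans hj')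
  obtain ⟨⟨k₀, c₀, k₁, c₁⟩, hβ, hβc⟩ := hcov i (hii'.trans hi') j' hj'
  obtain ⟨⟨l₀, d₀, l₁, d₁⟩, hγ, hγc⟩ := hcov i' hi' j (hjj'.trans hj')
  have eα := hα.eq_rectCorner hαc
  have eβ := hβ.eq_rectCorner hβc
  have eγ := hγ.eq_rectCorner hγc
  rw [ha] at eα
  rw [hb] at eβ
  rw [hc] at eγ
  simp only [rectCorner, Prod.mk.injEq] at eα eβ eγ
  obtain ⟨rfl, rfl⟩ := eα
  obtain ⟨rfl, rfl⟩ := eβ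
  obtain ⟨rfl, rfl⟩ := eγ
  obtain ⟨hi₁, hj₁, -, -, hαt, -, hαl, -⟩ := id hα
  obtain ⟨-, hc₀, -, -, hβt, -⟩ := id hβ
  obtain ⟨hl₀, -, -, -, -, -, hγl, -⟩ := id hγ
  dsimp only at hi₁ hj₁ hc₀ hl₀
  have hj'j₁ : j' ≤ j₁ := not_lt.1 fun h => side hα (r := i) (s := j₁) ⟨.inl rfl, .inr rfl⟩
    ⟨le_rfl, hii'.le, hj₁.le, h.le⟩ (by rintro ⟨-, h' | h'⟩ <;> dsimp only at h' <;> omega)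
    ⟨.inl rfl, .inl rfl⟩ ⟨.inl rfl, .inl rfl⟩
  have hc₀j : c₀ ≤ j := not_lt.1 fun h => side hβ (r := i) (s := c₀) ⟨.inl rfl, .inl rfl⟩
    ⟨le_rfl, hii'.le, h.le, hc₀.le⟩ (by rintro ⟨-, h' | h'⟩ <;> dsimp only at h' <;> omega)
    ⟨.inl rfl, .inr rfl⟩ ⟨.inl rfl, .inr rfl⟩
  have hi'i₁ : i' ≤ i₁ := not_lt.1 fun h => side hα (r := i₁) (s := j) ⟨.inr rfl, .inl rfl⟩
    ⟨hi₁.le, h.le, le_rfl, hjj'.le⟩ (by rintro ⟨h' | h', -⟩ <;> dsimp only at h' <;> omega)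
    ⟨.inl rfl, .inl rfl⟩ ⟨.inl rfl, .inl rfl⟩
  have hl₀i : l₀ ≤ i := not_lt.1 fun h => side hγ (r := l₀) (s := j) ⟨.inl rfl, .inl rfl⟩
    ⟨h.le, hl₀.le, le_rfl, hjj'.le⟩ (by rintro ⟨h' | h', -⟩ <;> dsimp only at h' <;> omega)
    ⟨.inr rfl, .inl rfl⟩ ⟨.inr rfl, .inl rfl⟩
  obtain rfl := hαt.isMatch.right_eq_of_le hβt.isMatch hjj' hj'j₁ hc₀j
  obtain rfl := hαl.isMatch.right_eq_of_le hγl.isMatch hii' hi'i₁ hl₀i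
  exact hα

theorem IsPrioClosed.mem_of_prio (hS : IsPrioClosed m n p S) (hα : IsRect m n p α)
    (hready : IsReady S α) {β : ℕ × ℕ × ℕ × ℕ} (h : prio m n p β α) : β ∈ S := by
  obtain ⟨hβ, -, hne, r, s, hc, hbox⟩ := h
  exact hS.mem_of_covered hβ hc
    (hready.2 r s hbox fun hcα => hne (hβ.eq_of_cornerOf hα hc hcα))

theorem IsPrioClosed.insert (hS : IsPrioClosed m n p S) (hα : IsRect m n p α)
    (h : ∀ β, prio m n p β α → β ∈ S) : IsPrioClosed m n p (insert α S) := by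
  refine ⟨fun γ hγ => ?_, fun β γ hβγ hγ => Finset.mem_insert_of_mem ?_⟩
  · rcases Finset.mem_insert.1 hγ with rfl | hγ
    exacts [hα, hS.1 γ hγ]
  · rcases Finset.mem_insert.1 hγ with rfl | hγ
    exacts [h β hβγ, hS.2 β γ hβγ hγ]

theorem IsPrioClosed.erase (hS : IsPrioClosed m n p S) (hmax : ∀ γ ∈ S, ¬ prio m n p α γ) :
    IsPrioClosed m n p (S.erase α) := by
  refine ⟨fun γ hγ => hS.1 γ (Finset.mem_of_mem_erase hγ), fun β γ hβγ hγ => ?_⟩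
  have hγS := Finset.mem_of_mem_erase hγ
  exact Finset.mem_erase.2 ⟨by rintro rfl; exact hmax γ hγS hβγ, hS.2 β γ hβγ hγS⟩

theorem IsPrioClosed.isReady_erase (hS : IsPrioClosed m n p S) (hcov : IsRectCovered m n p)
    (hα : α ∈ S) (hmax : ∀ γ ∈ S, ¬ prio m n p α γ) : IsReady (S.erase α) α := by
  have hαR := hS.1 α hα
  refine ⟨fun r s hc ⟨δ, hδ, hbox⟩ => ?_, fun r s hbox hnc => ?_⟩
  · obtain ⟨hne, hδS⟩ := Finset.mem_erase.1 hδ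
    exact hmax δ hδS ⟨hαR, hS.1 δ hδS, hne.symm, r, s, hc, hbox⟩
  · obtain ⟨γ, hγ, hγc⟩ :=
      hcov r (hbox.2.1.trans_lt hαR.2.2.1) s (hbox.2.2.2.trans_lt hαR.2.2.2.1)
    have hne : γ ≠ α := by rintro rfl; exact hnc hγc
    exact ⟨γ, Finset.mem_erase.2 ⟨hne, hS.2 γ α ⟨hγ, hαR, hne, r, s, hγc, hbox⟩ hα⟩,
      hγ.inBox_of_cornerOf hγc⟩

end PrioClosed

section Main

variable {m n : ℕ} {p : ℕ → ℕ → Del}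

theorem IsRect.of_prec {α β : ℕ × ℕ × ℕ × ℕ} (h : prec m n p α β) : IsRect m n p α := by
  obtain ⟨γ, hαγ, -⟩ := TransGen.head'_iff.1 h
  exact hαγ.1

theorem exists_prio_of_prec_self {α : ℕ × ℕ × ℕ × ℕ} (h : prec m n p α α) :
    ∃ β, prio m n p β α ∧ prec m n p β β := by
  obtain ⟨β, hαβ, hβα⟩ := TransGen.tail'_iff.1 h
  exact ⟨β, hβα, TransGen.head' hβα hαβ⟩

/-- A cyclic rectangle is never neutralized: its predecessor on the cycle would have to be
neutralized before it. -/
theorem exists_neutralize_of_reachable (hcov : IsRectCovered m n p) {q : ℕ → ℕ → DelN}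
    (h : ReflTransGen (nstep m n) (fun r s => embed (p r s)) q) :
    ∃ S, IsPrioClosed m n p S ∧ (∀ α ∈ S, ¬ prec m n p α α) ∧ q = neutralize p S := by
  induction h with
  | refl => exact ⟨∅, ⟨by simp, by simp⟩, by simp, neutralize_empty.symm⟩
  | tail _ hstep ih =>
    obtain ⟨S, hS, hacyc, rfl⟩ := ih
    obtain ⟨i, j, i', j', hii', hjj', hi', hj', ha, hb, hc, -, hready, rfl⟩ :=
      exists_isReady_of_nstep hstep
    have hα := hS.isRect_of_isReady hcov hii' hjj' hi' hj' ha hb hc hready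
    have hpred : ∀ β, prio m n p β _ → β ∈ S := fun _ => hS.mem_of_prio hα hready
    refine ⟨_, hS.insert hα hpred, fun β hβ hcyc => ?_, rfl⟩
    rcases Finset.mem_insert.1 hβ with rfl | hβ
    · obtain ⟨γ, hγβ, hγ⟩ := exists_prio_of_prec_self hcyc
      exact hacyc γ (hpred γ hγβ) hγ
    · exact hacyc β hβ hcyc

theorem not_prec_self_of_DN (hcov : IsRectCovered m n p) (h : DN m n p)
    {R : ℕ × ℕ × ℕ × ℕ} (hR : IsRect m n p R) : ¬ prec m n p R R := by
  obtain ⟨-, -, q, hq, hN⟩ := h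
  obtain ⟨S, hS, hacyc, rfl⟩ := exists_neutralize_of_reachable hcov hq
  have hcorner : Covered S R.1 R.2.1 :=
    neutralize_eq_N_iff.1 (hN _ (hR.1.trans hR.2.2.1) _ (hR.2.1.trans hR.2.2.2.1))
  exact hacyc R (hS.mem_of_covered hR ⟨.inl rfl, .inl rfl⟩ hcorner)

/-- A member of `S` with priority over no other member can be neutralized last. -/
theorem reachable_neutralize (hcov : IsRectCovered m n p)
    (hacyc : ∀ R, IsRect m n p R → ¬ prec m n p R R) (S : Finset (ℕ × ℕ × ℕ × ℕ))
    (hS : IsPrioClosed m n p S) :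
    ReflTransGen (nstep m n) (fun r s => embed (p r s)) (neutralize p S) := by
  induction S using Finset.strongInduction with
  | H S ih =>
    rcases S.eq_empty_or_nonempty with rfl | hne
    · rw [neutralize_empty]
    obtain ⟨α, hα, hmax⟩ :=
      Finset.exists_forall_not_rel_of_acyclic (fun a h => hacyc a (IsRect.of_prec h) h) hne
    rw [← Finset.insert_erase hα]
    exact (ih _ (Finset.erase_ssubset hα) (hS.erase hmax)).tail
      (nstep_neutralize_insert (hS.1 α hα) (hS.isReady_erase hcov hα hmax))

open Classical in
noncomputable def allRects (m n : ℕ) (p : ℕ → ℕ → Del) : Finset (ℕ × ℕ × ℕ × ℕ) :=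
  (Finset.range m ×ˢ Finset.range n ×ˢ Finset.range m ×ˢ Finset.range n).filter (IsRect m n p)

theorem mem_allRects {R : ℕ × ℕ × ℕ × ℕ} : R ∈ allRects m n p ↔ IsRect m n p R := by
  obtain ⟨i, j, i', j'⟩ := R
  simp only [allRects, Finset.mem_filter, Finset.mem_product, Finset.mem_range,
    and_iff_right_iff_imp]
  rintro ⟨hii', hjj', hi', hj', -⟩
  exact ⟨hii'.trans hi', hjj'.trans hj', hi', hj'⟩

theorem isPrioClosed_allRects : IsPrioClosed m n p (allRects m n p) :=
  ⟨fun _ hγ => mem_allRects.1 hγ, fun _ _ hβγ _ => mem_allRects.2 hβγ.1⟩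

theorem DN_of_acyclic (h : DQ m n p) (hacyc : ∀ R, IsRect m n p R → ¬ prec m n p R R) :
    DN m n p := by
  refine ⟨h.1.1, h.1.2.1, _, reachable_neutralize h.2 hacyc _ isPrioClosed_allRects,
    fun r hr s hs => ?_⟩
  obtain ⟨R, hR, hc⟩ := h.2 r hr s hs
  exact neutralize_eq_N_iff.2 ⟨R, mem_allRects.2 hR, hR.inBox_of_cornerOf hc⟩

end Main

/-- A quaternate Dyck crossword is neutralizable iff its precedence relation
is acyclic (equivalently, irreflexive). -/
theorem quaternate_neutralizable_iff_acyclic (m n : ℕ) (p : ℕ → ℕ → Del)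
    (h : DQ m n p) :
    DN m n p ↔ ∀ R, IsRect m n p R → ¬ prec m n p R R :=
  ⟨fun hDN _ => not_prec_self_of_DN h.2 hDN, DN_of_acyclic h⟩
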